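/- Fix δ² > α > 0. The function G(p) = p·log((δ² + (p−1)α)/(pα)) + log α is strictly increasing in p on (0,1), i.e., as p decreases toward 0, G(p) strictly decreases. -/

import Mathlib

/-! With `c = (δ² - α) / α > 0` the argument of the logarithm is `1 + c / p`, so up to the
constant `log α` the function is `p log (1 + c / p)`. Its derivative is `log y - (1 - y⁻¹)` at
`y = 1 + c / p > 1`, which is positive because `1 - y⁻¹ < log y` for `y ≠ 1`. -/

open Real Set

lemma Real.one_sub_inv_lt_log {x : ℝ} (hx : 0 < x) (hx1 : x ≠ 1) : 1 - x⁻¹ < log x := by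
  have := log_lt_sub_one_of_pos (inv_pos.mpr hx) (inv_ne_one.mpr hx1)
  rw [log_inv] at this
  linarith

lemma hasDerivAt_mul_log_one_add_div {a p : ℝ} (hp : p ≠ 0) (hpa : p + a ≠ 0) :
    HasDerivAt (fun q => q * log (1 + a / q)) (log (1 + a / p) - a / (p + a)) p := by
  have hone : 1 + a / p ≠ 0 := by rwa [one_add_div hp, div_ne_zero_iff, and_iff_left hp]
  have hlog := (((hasDerivAt_inv hp).const_mul a).const_add 1).log hone
  refine ((hasDerivAt_id' p).mul hlog).congr_deriv ?_
  field_simp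
  ring

theorem strictMonoOn_mul_log_one_add_div {a : ℝ} (ha : 0 < a) :
    StrictMonoOn (fun p => p * log (1 + a / p)) (Ioi 0) := by
  have hderiv : ∀ p ∈ Ioi (0 : ℝ),
      HasDerivAt (fun q => q * log (1 + a / q)) (log (1 + a / p) - a / (p + a)) p :=
    fun p (hp : 0 < p) => hasDerivAt_mul_log_one_add_div hp.ne' (by positivity)
  refine strictMonoOn_of_hasDerivWithinAt_pos (convex_Ioi 0)
    (fun p hp => (hderiv p hp).continuousAt.continuousWithinAt)
    (fun p hp => (hderiv p (interior_subset hp)).hasDerivWithinAt) fun p hp => ?_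
  rw [interior_Ioi] at hp
  have hp : 0 < p := hp
  have hlog := one_sub_inv_lt_log (x := 1 + a / p) (by positivity) (by simp [hp.ne', ha.ne'])
  have hinv : 1 - (1 + a / p)⁻¹ = a / (p + a) := by field_simp; ring
  linarith

theorem stmt9 (δsq α : ℝ) (hα : 0 < α) (hδ : α < δsq) :
    StrictMonoOn (fun p : ℝ => p * Real.log ((δsq + (p - 1) * α) / (p * α)) + Real.log α)
      (Set.Ioo (0 : ℝ) 1) := by
  have hratio : ∀ p ∈ Ioo (0 : ℝ) 1,
      (δsq + (p - 1) * α) / (p * α) = 1 + (δsq - α) / α / p := by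
    intro p hp
    have hp0 : p ≠ 0 := hp.1.ne'
    field_simp
    ring
  intro p hp q hq hpq
  simp only [hratio p hp, hratio q hq, add_lt_add_iff_right]
  exact strictMonoOn_mul_log_one_add_div (div_pos (sub_pos.mpr hδ) hα) hp.1 hq.1 hpq
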